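/- Let A = F_q[θ]. For all N ≥ 0 and s ≥ 1, applying ∂/∂X_{s+1} ⋯ ∂/∂X_{s+N+1} to the special polynomial S_{s+N+1}(X_1,…,X_{s+N+1},Z) yields the element L(−N,s,z)·(X_1⋯X_s), where L(−N,s,z) = Σ_{d≥0} z^d Σ_{a ∈ A_{+,d}} a(t_1)⋯a(t_s)·a^N ∈ A[t_1,…,t_s,z] acts on X_1⋯X_s via t_j·F = F(X_1,…,C_θ(X_j),…,X_s), z·Z^k-grading matching Z^{q^d} with z^d. -/

import Mathlib

noncomputable section

/-- The monic polynomial of degree `d` with lower coefficients `c`. -/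
def monicOf (Fq : Type) [Field Fq] (d : ℕ) (c : Fin d → Fq) : Polynomial Fq :=
  Polynomial.X ^ d + ∑ i : Fin d, Polynomial.C (c i) * Polynomial.X ^ (i : ℕ)

/-- `C_θ(X) = θ·X + X^q`. -/
def carlitzTheta (Fq : Type) [Field Fq] [Fintype Fq] : Polynomial (Polynomial Fq) :=
  Polynomial.C Polynomial.X * Polynomial.X + Polynomial.X ^ (Fintype.card Fq)

/-- `C_{θ^n}(X)`, the `n`-fold composition of `C_θ`. -/
def carlitzThetaPow (Fq : Type) [Field Fq] [Fintype Fq] : ℕ → Polynomial (Polynomial Fq)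
  | 0 => Polynomial.X
  | n + 1 => (carlitzTheta Fq).comp (carlitzThetaPow Fq n)

/-- The Carlitz module: `C_a(X) = ∑ c_i C_{θ^i}(X)` for `a = ∑ c_i θ^i`. -/
def carlitz (Fq : Type) [Field Fq] [Fintype Fq] (a : Polynomial Fq) :
    Polynomial (Polynomial Fq) :=
  ∑ i ∈ a.support, Polynomial.C (Polynomial.C (a.coeff i)) * carlitzThetaPow Fq i

/-- `D_i`: `D_0 = 1`, `D_i = (θ^{q^i} − θ)·D_{i−1}^q`. -/
def DPoly (Fq : Type) [Field Fq] [Fintype Fq] : ℕ → Polynomial Fq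
  | 0 => 1
  | i + 1 => ((Polynomial.X : Polynomial Fq) ^ (Fintype.card Fq ^ (i + 1)) - Polynomial.X) *
      (DPoly Fq i) ^ (Fintype.card Fq)

/-- The Carlitz `*`-action: `a*F = F(C_a(X_1),…,C_a(X_s))` for
`F ∈ A[X_1,…,X_s]`. -/
def starAction (Fq : Type) [Field Fq] [Fintype Fq] (s : ℕ) (a : Polynomial Fq)
    (F : MvPolynomial (Fin s) (Polynomial Fq)) : MvPolynomial (Fin s) (Polynomial Fq) :=
  MvPolynomial.bind₁
    (fun j => Polynomial.aeval (MvPolynomial.X j : MvPolynomial (Fin s) (Polynomial Fq))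
      (carlitz Fq a)) F

/-- `L_d(F) = ∑_{a ∈ A_{+,d}} (a*F)/a ∈ K[X_1,…,X_s]`. -/
def LFcoeff (Fq : Type) [Field Fq] [Fintype Fq] (s : ℕ)
    (F : MvPolynomial (Fin s) (Polynomial Fq)) (d : ℕ) :
    MvPolynomial (Fin s) (RatFunc Fq) :=
  ∑ c : Fin d → Fq,
    MvPolynomial.C ((algebraMap (Polynomial Fq) (RatFunc Fq) (monicOf Fq d c))⁻¹) *
      MvPolynomial.map (algebraMap (Polynomial Fq) (RatFunc Fq))
        (starAction Fq s (monicOf Fq d c) F)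

/-- The series `ℓ(F,Z) = ∑_{d ≥ 0} Z^{q^d} L_d(F) ∈ K[X_1,…,X_s][[Z]]`. -/
def ellSeries (Fq : Type) [Field Fq] [Fintype Fq] (s : ℕ)
    (F : MvPolynomial (Fin s) (Polynomial Fq)) :
    PowerSeries (MvPolynomial (Fin s) (RatFunc Fq)) :=
  PowerSeries.mk fun n =>
    ∑ d ∈ (Finset.range (n + 1)).filter (fun d => Fintype.card Fq ^ d = n),
      LFcoeff Fq s F d

/-- `exp_C(ℓ(F,Z)) = ∑_{i ≥ 0} D_i^{−1} ℓ(F,Z)^{q^i}`, computed coefficientwise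
(the coefficient of `Z^n` only receives contributions from `i ≤ n`). -/
def expEll (Fq : Type) [Field Fq] [Fintype Fq] (s : ℕ)
    (F : MvPolynomial (Fin s) (Polynomial Fq)) :
    PowerSeries (MvPolynomial (Fin s) (RatFunc Fq)) :=
  PowerSeries.mk fun n =>
    ∑ i ∈ Finset.range (n + 1),
      MvPolynomial.C ((algebraMap (Polynomial Fq) (RatFunc Fq) (DPoly Fq i))⁻¹) *
        PowerSeries.coeff n ((ellSeries Fq s F) ^ (Fintype.card Fq ^ i))

/-- The multivariable special polynomial
`S_m(X,Z) = exp_C(∑_{a monic} a*(X_1⋯X_m Z)/a)` in `m` variables, as a power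
series in `Z` over `K[X_1,…,X_m]`. -/
def SSeries (Fq : Type) [Field Fq] [Fintype Fq] (m : ℕ) :
    PowerSeries (MvPolynomial (Fin m) (RatFunc Fq)) :=
  expEll Fq m (∏ j : Fin m, MvPolynomial.X j)

/-- The operator `∂/∂X_{s+1} ⋯ ∂/∂X_{s+N+1}` on `K[X_1,…,X_{s+N+1}]`. -/
def derivOp (Fq : Type) [Field Fq] [Fintype Fq] (s N : ℕ)
    (f : MvPolynomial (Fin (s + (N + 1))) (RatFunc Fq)) :
    MvPolynomial (Fin (s + (N + 1))) (RatFunc Fq) :=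
  (List.finRange (N + 1)).foldr
    (fun j acc => MvPolynomial.pderiv (Fin.natAdd s j) acc) f

/-- The `Z^n`-coefficient of the series `L(−N,s,z)·(X_1⋯X_s)`, namely
`∑_{q^d = n} ∑_{a ∈ A_{+,d}} a^N · C_a(X_1)⋯C_a(X_s)` (viewed inside the
polynomial ring in `s + N + 1` variables, only the first `s` being used). -/
def LNegActionCoeff (Fq : Type) [Field Fq] [Fintype Fq] (s N n : ℕ) :
    MvPolynomial (Fin (s + (N + 1))) (RatFunc Fq) :=
  ∑ d ∈ (Finset.range (n + 1)).filter (fun d => Fintype.card Fq ^ d = n),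
    ∑ c : Fin d → Fq,
      MvPolynomial.C ((algebraMap (Polynomial Fq) (RatFunc Fq) (monicOf Fq d c)) ^ N) *
        ∏ j : Fin s,
          MvPolynomial.map (algebraMap (Polynomial Fq) (RatFunc Fq))
            (Polynomial.aeval
              (MvPolynomial.X (Fin.castAdd (N + 1) j) :
                MvPolynomial (Fin (s + (N + 1))) (Polynomial Fq))
              (carlitz Fq (monicOf Fq d c)))

/-!
Write `m = s + N + 1` and `S_m = ∑ᵢ D_i⁻¹ ℓ^{q^i}` with
`ℓ = ∑_a (C_a(X_1)⋯C_a(X_m)/a) Z^{q^{deg a}}`.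
Every term with `i ≥ 1` is a `q`-th power of a power series, and a partial derivative, applied
coefficientwise, is a derivation of the power series ring, which kills `q`-th powers because
`q = 0` in characteristic `p`. In `ℓ` itself, `∂/∂X_k` only sees the factor
`C_a(X_k)`, whose derivative is the constant `a` since `C_a(X) = aX + (terms in X^{q^i})`.
Differentiating in the last `N + 1` variables therefore turns `a⁻¹ C_a(X_1)⋯C_a(X_m)` into
`a^N C_a(X_1)⋯C_a(X_s)`.
-/

open MvPolynomial

namespace Derivation

variable {R A M : Type*} [CommSemiring R] [CommRing A] [Algebra R A]

theorem map_prod_eq_zero [AddCommMonoid M] [Module A M] [Module R M] (D : Derivation R A M)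
    {ι : Type*} (s : Finset ι) {f : ι → A} (h : ∀ i ∈ s, D (f i) = 0) :
    D (∏ i ∈ s, f i) = 0 :=
  Finset.prod_induction f (fun x => D x = 0)
    (fun a b ha hb => by rw [D.leibniz, ha, hb, smul_zero, smul_zero, add_zero])
    D.map_one_eq_zero h

noncomputable def mapPowerSeries (D : Derivation R A A) :
    Derivation R (PowerSeries A) (PowerSeries A) where
  toFun f := PowerSeries.mk fun n => D (PowerSeries.coeff n f)
  map_add' f g := by ext n; simp
  map_smul' r f := by ext n; simp
  map_one_eq_zero' := by ext n; simp [PowerSeries.coeff_one, apply_ite D]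
  leibniz' f g := by
    ext n
    simp only [PowerSeries.coeff_mul, map_sum, leibniz, smul_eq_mul, LinearMap.coe_mk,
      AddHom.coe_mk, PowerSeries.coeff_mk, map_add, Finset.sum_add_distrib]
    rw [← Finset.Nat.sum_antidiagonal_swap (f := fun x => _ * D (PowerSeries.coeff x.2 f))]
    rfl

@[simp]
theorem coeff_mapPowerSeries (D : Derivation R A A) (f : PowerSeries A) (n : ℕ) :
    PowerSeries.coeff n (D.mapPowerSeries f) = D (PowerSeries.coeff n f) :=
  PowerSeries.coeff_mk n fun n => D (PowerSeries.coeff n f)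

theorem map_coeff_pow_eq_zero (D : Derivation R A A) {q : ℕ} (hq : (q : A) = 0)
    (f : PowerSeries A) (n : ℕ) : D (PowerSeries.coeff n (f ^ q)) = 0 := by
  have hq' : (q : PowerSeries A) = 0 := by
    rw [← _root_.map_natCast (PowerSeries.C (R := A)), hq, map_zero]
  rw [← coeff_mapPowerSeries, leibniz_pow, nsmul_eq_mul, hq', zero_mul, map_zero]

end Derivation

namespace MvPolynomial

variable {σ R : Type*} [CommSemiring R]

noncomputable def iteratedPDeriv (l : List σ) : Module.End R (MvPolynomial σ R) :=
  (l.map fun i => (pderiv i).toLinearMap).prod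

@[simp]
theorem iteratedPDeriv_cons (i : σ) (l : List σ) (f : MvPolynomial σ R) :
    iteratedPDeriv (i :: l) f = pderiv i (iteratedPDeriv l f) := rfl

theorem foldr_pderiv_eq_iteratedPDeriv {κ : Type*} (g : κ → σ) (l : List κ)
    (f : MvPolynomial σ R) :
    l.foldr (fun j acc => pderiv (g j) acc) f = iteratedPDeriv (l.map g) f := by
  induction l with
  | nil => rfl
  | cons j l ih => rw [List.foldr_cons, ih]; rfl

theorem iteratedPDeriv_eq_zero {l : List σ} (hl : l ≠ []) {f : MvPolynomial σ R}
    (hf : ∀ i ∈ l, pderiv i f = 0) : iteratedPDeriv l f = 0 := by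
  induction l with
  | nil => exact absurd rfl hl
  | cons i l ih =>
    rcases eq_or_ne l [] with rfl | hl'
    · exact hf i List.mem_cons_self
    · rw [iteratedPDeriv_cons, ih hl' fun j hj => hf j (List.mem_cons_of_mem i hj), map_zero]

theorem iteratedPDeriv_mul_of_pderiv_eq_zero {l : List σ} {g : MvPolynomial σ R}
    (hg : ∀ i ∈ l, pderiv i g = 0) (f : MvPolynomial σ R) :
    iteratedPDeriv l (g * f) = g * iteratedPDeriv l f := by
  induction l with
  | nil => rfl
  | cons i l ih =>
    rw [iteratedPDeriv_cons, ih fun j hj => hg j (List.mem_cons_of_mem i hj), pderiv_mul,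
      hg i List.mem_cons_self, zero_mul, zero_add, iteratedPDeriv_cons]

theorem iteratedPDeriv_prod_map {l : List σ} (hl : l.Nodup) (H : σ → MvPolynomial σ R) (u : R)
    (hself : ∀ i, pderiv i (H i) = C u) (hne : ∀ i j, i ≠ j → pderiv i (H j) = 0) :
    iteratedPDeriv l (l.map H).prod = C u ^ l.length := by
  induction l with
  | nil => rfl
  | cons i l ih =>
    have hi : i ∉ l := (List.nodup_cons.mp hl).1
    rw [List.map_cons, List.prod_cons, iteratedPDeriv_cons,
      iteratedPDeriv_mul_of_pderiv_eq_zero (fun j hj => hne j i (ne_of_mem_of_not_mem hj hi)),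
      ih (List.nodup_cons.mp hl).2, ← map_pow, pderiv_mul, pderiv_C, hself, mul_zero, add_zero,
      ← C_mul, ← pow_succ', List.length_cons, map_pow]

theorem pderiv_aeval_X_self (P : Polynomial R) (i : σ) :
    pderiv i (Polynomial.aeval (X i : MvPolynomial σ R) P) =
      Polynomial.aeval (X i) (Polynomial.derivative P) := by
  rw [Derivation.map_aeval, pderiv_X_self, smul_eq_mul, mul_one]

theorem pderiv_map_aeval_X_of_ne {S : Type*} [CommSemiring S] (φ : R →+* S) (P : Polynomial R)
    {i j : σ} (h : j ≠ i) :
    pderiv i (map φ (Polynomial.aeval (X j : MvPolynomial σ R) P)) = 0 := by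
  rw [pderiv_map, Derivation.map_aeval, pderiv_X_of_ne h, smul_zero, map_zero]

end MvPolynomial

theorem monicOf_ne_zero (Fq : Type) [Field Fq] (d : ℕ) (c : Fin d → Fq) :
    monicOf Fq d c ≠ 0 :=
  (Polynomial.monic_X_pow_add (Polynomial.degree_sum_fin_lt c)).ne_zero

section Carlitz

variable (Fq : Type) [Field Fq] [Fintype Fq]

theorem derivative_carlitzThetaPow (i : ℕ) :
    Polynomial.derivative (carlitzThetaPow Fq i) = Polynomial.C (Polynomial.X ^ i) := by
  induction i with
  | zero => simp [carlitzThetaPow]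
  | succ i ih =>
    have hq : (Fintype.card Fq : Polynomial Fq) = 0 := by
      rw [← map_natCast Polynomial.C, FiniteField.cast_card_eq_zero, map_zero]
    have hθ : Polynomial.derivative (carlitzTheta Fq) = Polynomial.C Polynomial.X := by
      simp [carlitzTheta, Polynomial.derivative_X_pow, hq]
    rw [carlitzThetaPow, Polynomial.derivative_comp, ih, hθ, Polynomial.C_comp,
      ← Polynomial.C_mul, ← pow_succ]

theorem derivative_carlitz (a : Polynomial Fq) :
    Polynomial.derivative (carlitz Fq a) = Polynomial.C a := by
  rw [carlitz, map_sum]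
  simp only [Polynomial.derivative_C_mul, derivative_carlitzThetaPow, ← Polynomial.C_mul]
  rw [← map_sum]
  congr 1
  conv_rhs => rw [← Polynomial.sum_C_mul_X_pow_eq a]
  rfl

variable {Fq}
variable {S : Type*} [CommRing S] (φ : Polynomial Fq →+* S)

theorem pderiv_map_aeval_X_carlitz_self {σ : Type*} (a : Polynomial Fq) (i : σ) :
    pderiv i (map φ (Polynomial.aeval (X i : MvPolynomial σ (Polynomial Fq)) (carlitz Fq a))) =
      C (φ a) := by
  rw [pderiv_map, pderiv_aeval_X_self, derivative_carlitz, Polynomial.aeval_C, algebraMap_eq,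
    map_C]

theorem starAction_prod_X (m : ℕ) (a : Polynomial Fq) :
    starAction Fq m a (∏ j : Fin m, X j) =
      ∏ j : Fin m,
        Polynomial.aeval (X j : MvPolynomial (Fin m) (Polynomial Fq)) (carlitz Fq a) := by
  simp [starAction, map_prod, bind₁_X_right]

theorem iteratedPDeriv_natAdd_map_starAction_prod_X (s N : ℕ) (a : Polynomial Fq) :
    iteratedPDeriv ((List.finRange (N + 1)).map (Fin.natAdd s))
        (map φ (starAction Fq (s + (N + 1)) a (∏ j, X j))) =
      C (φ a ^ (N + 1)) * ∏ j : Fin s,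
        map φ (Polynomial.aeval (X (Fin.castAdd (N + 1) j) :
          MvPolynomial (Fin (s + (N + 1))) (Polynomial Fq)) (carlitz Fq a)) := by
  set H : Fin (s + (N + 1)) → MvPolynomial (Fin (s + (N + 1))) S := fun j =>
    map φ (Polynomial.aeval (X j) (carlitz Fq a))
  have hne : ∀ i j, i ≠ j → pderiv i (H j) = 0 := fun i j h =>
    pderiv_map_aeval_X_of_ne φ _ h.symm
  have hlast : ∏ i : Fin (N + 1), H (Fin.natAdd s i) =
      (((List.finRange (N + 1)).map (Fin.natAdd s)).map H).prod := by
    rw [Fin.prod_univ_def, List.map_map]; rfl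
  rw [starAction_prod_X, map_prod, Fin.prod_univ_add, hlast,
    iteratedPDeriv_mul_of_pderiv_eq_zero,
    iteratedPDeriv_prod_map ((List.nodup_finRange _).map (Fin.natAdd_injective _ _)) H (φ a)
      (pderiv_map_aeval_X_carlitz_self φ a) hne,
    List.length_map, List.length_finRange, map_pow, mul_comm]
  intro i hi
  obtain ⟨k, -, rfl⟩ := List.mem_map.mp hi
  exact Derivation.map_prod_eq_zero _ _ fun j _ => hne _ _
    (Fin.ne_of_val_ne (by simp only [Fin.val_natAdd, Fin.val_castAdd]; omega))

theorem iteratedPDeriv_coeff_expEll {m : ℕ} {l : List (Fin m)} (hl : l ≠ [])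
    (F : MvPolynomial (Fin m) (Polynomial Fq)) (n : ℕ) :
    iteratedPDeriv l (PowerSeries.coeff n (expEll Fq m F)) =
      iteratedPDeriv l (PowerSeries.coeff n (ellSeries Fq m F)) := by
  have hq : (Fintype.card Fq : MvPolynomial (Fin m) (RatFunc Fq)) = 0 := by
    rw [← map_natCast (algebraMap Fq _), FiniteField.cast_card_eq_zero, map_zero]
  rw [expEll, PowerSeries.coeff_mk, map_sum, Finset.sum_range_succ', Finset.sum_eq_zero, zero_add]
  · simp [DPoly]
  · intro i _
    rw [C_mul', map_smul, iteratedPDeriv_eq_zero hl, smul_zero]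
    intro j _
    rw [pow_succ, pow_mul]
    exact (pderiv j).map_coeff_pow_eq_zero hq _ n

end Carlitz

theorem stmt_19_general (Fq : Type) [Field Fq] [Fintype Fq] (s N : ℕ) :
    ∀ n : ℕ,
      derivOp Fq s N (PowerSeries.coeff n (SSeries Fq (s + (N + 1)))) =
        LNegActionCoeff Fq s N n := by
  intro n
  have hderiv : derivOp Fq s N = iteratedPDeriv ((List.finRange (N + 1)).map (Fin.natAdd s)) :=
    funext (foldr_pderiv_eq_iteratedPDeriv _ _)
  rw [hderiv, SSeries, iteratedPDeriv_coeff_expEll (by simp), ellSeries, PowerSeries.coeff_mk,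
    map_sum, LNegActionCoeff]
  refine Finset.sum_congr rfl fun d _ => ?_
  rw [LFcoeff, map_sum]
  refine Finset.sum_congr rfl fun c _ => ?_
  have ha : algebraMap (Polynomial Fq) (RatFunc Fq) (monicOf Fq d c) ≠ 0 :=
    RatFunc.algebraMap_ne_zero (monicOf_ne_zero Fq d c)
  rw [C_mul', map_smul, iteratedPDeriv_natAdd_map_starAction_prod_X, smul_eq_C_mul, ← mul_assoc,
    ← C_mul, pow_succ', inv_mul_cancel_left₀ ha]

/-- For all `N ≥ 0`, `s ≥ 1`, applying
`∂/∂X_{s+1} ⋯ ∂/∂X_{s+N+1}` to `S_{s+N+1}(X_1,…,X_{s+N+1},Z)` yields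
`L(−N,s,z)·(X_1⋯X_s)` (coefficientwise in the `Z`-grading matching `Z^{q^d}`
with `z^d`). -/
theorem stmt_19 (Fq : Type) [Field Fq] [Fintype Fq] (s N : ℕ) (hs : 1 ≤ s) :
    ∀ n : ℕ,
      derivOp Fq s N (PowerSeries.coeff n (SSeries Fq (s + (N + 1)))) =
        LNegActionCoeff Fq s N n :=
  stmt_19_general Fq s N

end
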